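/- Let x ⊆ [n], |x| = k, n/2 ≤ k ≤ n, and let i₁ < ... < i_t be the elements of *(x) ∩ x (starred positions in x w.r.t. the linear signature) and j₁ < ... < j_{t−2k+n} the elements of *(x)\x. Then for 1 ≤ r ≤ 2k−n one has csg(x)_{i_r} = * (so |*'(x)| = 2k − n); for 2k−n < r ≤ t one has csg(x)_{i_r} = 1 with circular pair pr'_x(i_r) = j_{t+1−r}; and for 1 ≤ s ≤ t−2k+n, csg(x)_{j_s} = 0 with pr'_x(j_s) = i_{t+1−s}. Moreover, at every position not in *(x) the circular signature agrees with the linear signature and circular pairs agree with linear pairs. -/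

import Mathlib

/-- `c_x(i,j) = |x ∩ [i,j]| - |[i,j] \ x|` (linear). -/
def cfun (x : Finset ℕ) (i j : ℕ) : ℤ :=
  ((Finset.Icc i j ∩ x).card : ℤ) - ((Finset.Icc i j \ x).card : ℤ)

-- The linear signature value of position `i` in `x ⊆ [n]`: `1`, `0`, or `2` (for `*`).
open Classical in
noncomputable def sgv (n : ℕ) (x : Finset ℕ) (i : ℕ) : ℕ :=
  if i ∈ x then (if ∃ j ∈ Finset.Ioc i n, cfun x i j = 0 then 1 else 2)
  else (if ∃ j ∈ Finset.Ico 1 i, cfun x j i = 0 then 0 else 2)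

/-- The circular interval `[i,j]_n ⊆ {1,...,n}`. -/
def cIcc (n i j : ℕ) : Finset ℕ :=
  if i ≤ j then Finset.Icc i j else Finset.Icc i n ∪ Finset.Icc 1 j

/-- `c'_x(i,j) = |[i,j]_n ∩ x| - |[i,j]_n \ x|`. -/
def ccfun (n : ℕ) (x : Finset ℕ) (i j : ℕ) : ℤ :=
  ((cIcc n i j ∩ x).card : ℤ) - ((cIcc n i j \ x).card : ℤ)

/-- `j = pr'_x(i)` for `i ∈ x`: `c'_x(i,j) = 0` and `|[i,j]_n|` is minimal. -/
def IsCPairIn (n : ℕ) (x : Finset ℕ) (i j : ℕ) : Prop :=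
  j ∈ Finset.Icc 1 n ∧ ccfun n x i j = 0 ∧
    ∀ j' ∈ Finset.Icc 1 n, ccfun n x i j' = 0 → (cIcc n i j).card ≤ (cIcc n i j').card

/-- `j = pr'_x(i)` for `i ∉ x`: `c'_x(j,i) = 0` and `|[j,i]_n|` is minimal. -/
def IsCPairOut (n : ℕ) (x : Finset ℕ) (i j : ℕ) : Prop :=
  j ∈ Finset.Icc 1 n ∧ ccfun n x j i = 0 ∧
    ∀ j' ∈ Finset.Icc 1 n, ccfun n x j' i = 0 → (cIcc n j i).card ≤ (cIcc n j' i).card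

/-- `csg(x)_i = *`: position `i` has no circular pair. -/
def CStar (n : ℕ) (x : Finset ℕ) (i : ℕ) : Prop :=
  (i ∈ x ∧ ¬∃ j ∈ Finset.Icc 1 n, ccfun n x i j = 0) ∨
  (i ∉ x ∧ ¬∃ j ∈ Finset.Icc 1 n, ccfun n x j i = 0)

/-!
Read `x` as the lattice path with height `h(j) = c_x(1, j)`, stepping up at elements of `x`
and down elsewhere; it ends at `h(n) = 2k - n ≥ 0` and has minimum `m ≤ 0`. A position
`i ∈ x` is linearly starred iff `i - 1` is the last visit of the level `h(i - 1)`, and `j ∉ x`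
is starred iff `h(j)` is a new strict minimum. Hence the starred positions in `x` are indexed,
in increasing order, by the levels `m, …, h(n) - 1`, and those outside `x` by the levels
`-1, …, m`. A circular interval from `i` round to `j < i` has signed count
`h(n) - h(i - 1) + h(j)`, so `i` is circularly paired with the first visit of the level
`h(i - 1) - h(n)`; it exists iff this level is `≥ m`, which fails exactly for the first
`2k - n` starred positions in `x`.
-/

open Finset

namespace Signature

theorem exists_eq_of_succ_le_add_one {f : ℕ → ℤ} (hf : ∀ j, f (j + 1) ≤ f j + 1) {a b : ℕ}
    {c : ℤ} (hab : a ≤ b) (ha : f a ≤ c) (hb : c ≤ f b) : ∃ j, a ≤ j ∧ j ≤ b ∧ f j = c := by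
  induction b, hab using Nat.le_induction with
  | base => exact ⟨a, le_rfl, le_rfl, le_antisymm ha hb⟩
  | succ b hab ih =>
    by_cases h : c ≤ f b
    · obtain ⟨j, haj, hjb, hj⟩ := ih h
      exact ⟨j, haj, by omega, hj⟩
    · have := hf b
      exact ⟨b + 1, by omega, le_rfl, by omega⟩

theorem natCast_card_eq_of_image_eq_Icc {α : Type*} {s : Finset α} {f : α → ℤ} {a b : ℤ}
    (hf : Set.InjOn f s) (himage : s.image f = Icc a b) (hab : a ≤ b + 1) :
    (#s : ℤ) = b + 1 - a := by
  rw [← card_image_of_injOn hf, himage, Int.card_Icc]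
  omega

theorem natCast_card_filter_le_of_strictMonoOn {α : Type*} [LinearOrder α] {s : Finset α}
    {f : α → ℤ} {a b : ℤ} (hf : StrictMonoOn f s) (himage : s.image f = Icc a b) {i : α}
    (hi : i ∈ s) : (#(s.filter (· ≤ i)) : ℤ) = f i + 1 - a := by
  have mem_Icc_of_mem {m : α} (hm : m ∈ s) : a ≤ f m ∧ f m ≤ b :=
    mem_Icc.1 (himage ▸ mem_image_of_mem f hm)
  refine natCast_card_eq_of_image_eq_Icc (hf.injOn.mono (coe_subset.2 (filter_subset _ _))) ?_
    (by linarith [(mem_Icc_of_mem hi).1])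
  ext v
  simp only [mem_image, mem_filter, mem_Icc]
  constructor
  · rintro ⟨m, ⟨hm, hmi⟩, rfl⟩
    exact ⟨(mem_Icc_of_mem hm).1, (hf.le_iff_le hm hi).2 hmi⟩
  · rintro ⟨hav, hvi⟩
    obtain ⟨m, hm, rfl⟩ :=
      mem_image.1 (himage ▸ mem_Icc.2 ⟨hav, hvi.trans (mem_Icc_of_mem hi).2⟩)
    exact ⟨m, ⟨hm, (hf.le_iff_le hm hi).1 hvi⟩, rfl⟩

def signedCard (x s : Finset ℕ) : ℤ := (#(s ∩ x) : ℤ) - #(s \ x)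

theorem signedCard_union {x s t : Finset ℕ} (h : Disjoint s t) :
    signedCard x (s ∪ t) = signedCard x s + signedCard x t := by
  rw [signedCard, union_inter_distrib_right, union_sdiff_distrib,
    card_union_of_disjoint (h.mono inter_subset_left inter_subset_left),
    card_union_of_disjoint (h.mono sdiff_subset sdiff_subset), signedCard, signedCard]
  push_cast
  ring

def height (x : Finset ℕ) (j : ℕ) : ℤ := signedCard x (Icc 1 j)

noncomputable def minHeight (n : ℕ) (x : Finset ℕ) : ℤ :=
  (range (n + 1)).inf' nonempty_range_add_one (height x)

variable {n : ℕ} {x : Finset ℕ}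

theorem height_zero : height x 0 = 0 := by
  simp [height, signedCard]

theorem cfun_eq_height_sub {i j : ℕ} (hi : 1 ≤ i) (hij : i ≤ j + 1) :
    cfun x i j = height x j - height x (i - 1) := by
  have hunion : Icc 1 j = Icc 1 (i - 1) ∪ Icc i j := by
    ext m; simp only [mem_union, mem_Icc]; omega
  have hdisj : Disjoint (Icc 1 (i - 1)) (Icc i j) :=
    disjoint_left.2 fun m hm hm' => by simp only [mem_Icc] at hm hm'; omega
  rw [height, hunion, signedCard_union hdisj, height]
  simp only [cfun, signedCard]
  ring

theorem cfun_self_of_mem {i : ℕ} (h : i ∈ x) : cfun x i i = 1 := by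
  simp [cfun, h, sdiff_eq_empty_iff_subset.2 (singleton_subset_iff.2 h)]

theorem cfun_self_of_notMem {i : ℕ} (h : i ∉ x) : cfun x i i = -1 := by
  simp [cfun, h, sdiff_eq_self_of_disjoint (disjoint_singleton_left.2 h)]

theorem height_succ_of_mem {j : ℕ} (h : j + 1 ∈ x) : height x (j + 1) = height x j + 1 := by
  have := cfun_eq_height_sub (x := x) (i := j + 1) (j := j + 1) (by omega) (by omega)
  rw [cfun_self_of_mem h, Nat.add_sub_cancel] at this
  linarith

theorem height_succ_of_notMem {j : ℕ} (h : j + 1 ∉ x) : height x (j + 1) = height x j - 1 := by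
  have := cfun_eq_height_sub (x := x) (i := j + 1) (j := j + 1) (by omega) (by omega)
  rw [cfun_self_of_notMem h, Nat.add_sub_cancel] at this
  linarith

theorem exists_height_eq_of_le_of_le {a b : ℕ} {c : ℤ} (hab : a ≤ b) (ha : height x a ≤ c)
    (hb : c ≤ height x b) : ∃ j, a ≤ j ∧ j ≤ b ∧ height x j = c := by
  refine exists_eq_of_succ_le_add_one (fun j => ?_) hab ha hb
  by_cases hj : j + 1 ∈ x
  · rw [height_succ_of_mem hj]
  · rw [height_succ_of_notMem hj]; omega

theorem exists_height_eq_of_ge_of_ge {a b : ℕ} {c : ℤ} (hab : a ≤ b) (ha : c ≤ height x a)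
    (hb : height x b ≤ c) : ∃ j, a ≤ j ∧ j ≤ b ∧ height x j = c := by
  have step (j : ℕ) : -height x (j + 1) ≤ -height x j + 1 := by
    by_cases hj : j + 1 ∈ x
    · rw [height_succ_of_mem hj]; omega
    · rw [height_succ_of_notMem hj]; omega
  obtain ⟨j, haj, hjb, hj⟩ :=
    exists_eq_of_succ_le_add_one step hab (neg_le_neg ha) (neg_le_neg hb)
  exact ⟨j, haj, hjb, neg_inj.1 hj⟩

theorem height_eq (hx : x ⊆ Icc 1 n) : height x n = 2 * (#x : ℤ) - n := by
  have hcard : #(Icc 1 n \ x) = n - #x := by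
    rw [card_sdiff_of_subset hx, Nat.card_Icc]; omega
  have hxn : #x ≤ n := by simpa using card_le_card hx
  rw [height, signedCard, inter_eq_right.2 hx, hcard]
  omega

theorem minHeight_le {a : ℕ} (ha : a ≤ n) : minHeight n x ≤ height x a :=
  inf'_le _ (mem_range.2 (by omega))

theorem exists_height_eq_minHeight : ∃ a ≤ n, height x a = minHeight n x := by
  obtain ⟨a, ha, heq⟩ := exists_mem_eq_inf' nonempty_range_add_one (height x)
  exact ⟨a, by simpa [Nat.lt_succ_iff] using ha, heq.symm⟩

theorem minHeight_nonpos : minHeight n x ≤ 0 :=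
  height_zero (x := x) ▸ minHeight_le (Nat.zero_le n)

theorem sgv_mem_eq_two_iff {i : ℕ} (hi : i ∈ x) :
    sgv n x i = 2 ↔ ¬∃ j ∈ Ioc i n, cfun x i j = 0 := by
  rw [sgv, if_pos hi]
  split_ifs with h
  · exact iff_of_false (by decide) (not_not.2 h)
  · exact iff_of_true rfl h

theorem sgv_notMem_eq_two_iff {j : ℕ} (hj : j ∉ x) :
    sgv n x j = 2 ↔ ¬∃ i ∈ Ico 1 j, cfun x i j = 0 := by
  rw [sgv, if_neg hj]
  split_ifs with h
  · exact iff_of_false (by decide) (not_not.2 h)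
  · exact iff_of_true rfl h

theorem sgv_mem_eq_two_iff_height {i : ℕ} (hi : i ∈ x) (hi1 : 1 ≤ i) :
    sgv n x i = 2 ↔ ∀ j, i ≤ j → j ≤ n → height x (i - 1) < height x j := by
  have hstep : height x i = height x (i - 1) + 1 := by
    have := cfun_eq_height_sub (x := x) hi1 (Nat.le_succ i)
    rw [cfun_self_of_mem hi] at this
    linarith
  rw [sgv_mem_eq_two_iff hi]
  constructor
  · intro hno j hij hjn
    by_contra! hle
    obtain ⟨j', hij', hj'j, hj'⟩ := exists_height_eq_of_ge_of_ge hij (by omega) hle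
    have hne : i ≠ j' := by rintro rfl; omega
    exact hno ⟨j', mem_Ioc.2 ⟨lt_of_le_of_ne hij' hne, by omega⟩,
      by rw [cfun_eq_height_sub hi1 (by omega), hj', sub_self]⟩
  · rintro hlt ⟨j, hj, h0⟩
    rw [mem_Ioc] at hj
    rw [cfun_eq_height_sub hi1 (by omega)] at h0
    have := hlt j hj.1.le hj.2
    omega

theorem sgv_notMem_eq_two_iff_height {j : ℕ} (hj : j ∉ x) (hj1 : 1 ≤ j) :
    sgv n x j = 2 ↔ ∀ a < j, height x j < height x a := by
  have hstep : height x j = height x (j - 1) - 1 := by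
    have := cfun_eq_height_sub (x := x) hj1 (Nat.le_succ j)
    rw [cfun_self_of_notMem hj] at this
    linarith
  rw [sgv_notMem_eq_two_iff hj]
  constructor
  · intro hno a ha
    by_contra! hle
    obtain ⟨a', haa', ha'j, ha'⟩ :=
      exists_height_eq_of_le_of_le (b := j - 1) (by omega) hle (by omega)
    have hne : a' ≠ j - 1 := by rintro rfl; omega
    exact hno ⟨a' + 1, mem_Ico.2 ⟨by omega, by omega⟩,
      by rw [cfun_eq_height_sub (by omega) (by omega), Nat.add_sub_cancel, ha', sub_self]⟩
  · rintro hlt ⟨i, hi, h0⟩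
    rw [mem_Ico] at hi
    rw [cfun_eq_height_sub hi.1 (by omega)] at h0
    have := hlt (i - 1) (by omega)
    omega

theorem height_neg_of_notMem_of_sgv_eq_two {j : ℕ} (hj : j ∉ x) (hj1 : 1 ≤ j)
    (hsj : sgv n x j = 2) : height x j < 0 :=
  height_zero (x := x) ▸ (sgv_notMem_eq_two_iff_height hj hj1).1 hsj 0 (by omega)

theorem exists_mem_sgv_eq_two_height_eq {v : ℤ} (hmv : minHeight n x ≤ v)
    (hvn : v < height x n) : ∃ i ∈ x, sgv n x i = 2 ∧ height x (i - 1) = v := by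
  obtain ⟨a₀, ha₀n, ha₀⟩ := exists_height_eq_minHeight (n := n) (x := x)
  obtain ⟨a', -, ha'n, ha'⟩ := exists_height_eq_of_le_of_le ha₀n (ha₀ ▸ hmv) hvn.le
  set a := Nat.findGreatest (fun a => height x a = v) n
  have ha : height x a = v := Nat.findGreatest_spec (P := fun a => height x a = v) ha'n ha'
  have hlast : ∀ j, a < j → j ≤ n → v < height x j := by
    intro j haj hjn
    by_contra! hle
    obtain ⟨j', hjj', hj'n, hj'⟩ := exists_height_eq_of_le_of_le hjn hle hvn.le
    exact Nat.findGreatest_is_greatest (P := fun a => height x a = v) (by omega) hj'n hj'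
  have han : a < n := by
    refine lt_of_le_of_ne (Nat.findGreatest_le n) fun h => ?_
    rw [h] at ha
    omega
  have hax : a + 1 ∈ x := by
    by_contra h
    have := hlast (a + 1) (by omega) (by omega)
    rw [height_succ_of_notMem h] at this
    omega
  refine ⟨a + 1, hax, (sgv_mem_eq_two_iff_height hax (by omega)).2 fun j hj hjn => ?_, ha⟩
  simpa [ha] using hlast j (by omega) hjn

theorem exists_notMem_sgv_eq_two_height_eq {v : ℤ} (hmv : minHeight n x ≤ v) (hv : v < 0) :
    ∃ j ∈ Icc 1 n, j ∉ x ∧ sgv n x j = 2 ∧ height x j = v := by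
  obtain ⟨a₀, ha₀n, ha₀⟩ := exists_height_eq_minHeight (n := n) (x := x)
  obtain ⟨j₀, -, hj₀a₀, hj₀⟩ :=
    exists_height_eq_of_ge_of_ge (Nat.zero_le a₀) (height_zero (x := x) ▸ hv.le) (ha₀ ▸ hmv)
  have hvisit : ∃ j, height x j = v := ⟨j₀, hj₀⟩
  set j := Nat.find hvisit
  have hj : height x j = v := Nat.find_spec hvisit
  have hjn : j ≤ n := (Nat.find_min' hvisit hj₀).trans (hj₀a₀.trans ha₀n)
  have hfirst : ∀ a < j, v < height x a := by
    intro a ha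
    by_contra! hle
    obtain ⟨a', -, ha'a, ha'⟩ :=
      exists_height_eq_of_ge_of_ge (Nat.zero_le a) (height_zero (x := x) ▸ hv.le) hle
    exact Nat.find_min hvisit (by omega) ha'
  have hj1 : 1 ≤ j := by
    refine Nat.one_le_iff_ne_zero.2 fun h => ?_
    rw [h, height_zero] at hj
    omega
  have hjx : j ∉ x := by
    intro h
    have := hfirst (j - 1) (by omega)
    have := height_succ_of_mem (x := x) (j := j - 1) (by rwa [Nat.sub_add_cancel hj1])
    rw [Nat.sub_add_cancel hj1] at this
    omega
  exact ⟨j, mem_Icc.2 ⟨hj1, hjn⟩, hjx,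
    (sgv_notMem_eq_two_iff_height hjx hj1).2 (hj ▸ hfirst), hj⟩

theorem notMem_lt_mem (hx : x ⊆ Icc 1 n) {i j : ℕ} (hi : i ∈ x) (hsi : sgv n x i = 2)
    (hj : j ∈ Icc 1 n) (hjx : j ∉ x) (hsj : sgv n x j = 2) : j < i := by
  obtain ⟨hi1, -⟩ := mem_Icc.1 (hx hi)
  obtain ⟨hj1, hjn⟩ := mem_Icc.1 hj
  by_contra! hij
  have hij' : i < j := lt_of_le_of_ne hij (by rintro rfl; exact hjx hi)
  have := (sgv_mem_eq_two_iff_height hi hi1).1 hsi j hij'.le hjn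
  have := (sgv_notMem_eq_two_iff_height hjx hj1).1 hsj (i - 1) (by omega)
  omega

theorem strictMonoOn_height_pred (hx : x ⊆ Icc 1 n) :
    StrictMonoOn (fun i => height x (i - 1)) (x.filter (fun m => sgv n x m = 2)) := by
  intro i hi i' hi' hii'
  simp only [mem_coe, mem_filter] at hi hi'
  have := mem_Icc.1 (hx hi.1)
  have := mem_Icc.1 (hx hi'.1)
  exact (sgv_mem_eq_two_iff_height hi.1 (by omega)).1 hi.2 (i' - 1) (by omega) (by omega)

theorem strictAntiOn_height :
    StrictAntiOn (height x) ((Icc 1 n).filter (fun m => sgv n x m = 2 ∧ m ∉ x)) := by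
  intro j hj j' hj' hjj'
  simp only [mem_coe, mem_filter, mem_Icc] at hj hj'
  exact (sgv_notMem_eq_two_iff_height hj'.2.2 hj'.1.1).1 hj'.2.1 j hjj'

theorem image_height_pred_filter_sgv_eq_two (hx : x ⊆ Icc 1 n) :
    (x.filter (fun m => sgv n x m = 2)).image (fun i => height x (i - 1)) =
      Icc (minHeight n x) (height x n - 1) := by
  ext v
  simp only [mem_image, mem_filter, mem_Icc]
  constructor
  · rintro ⟨i, ⟨hi, hsi⟩, rfl⟩
    have := mem_Icc.1 (hx hi)
    have := (sgv_mem_eq_two_iff_height hi (by omega)).1 hsi n (by omega) le_rfl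
    exact ⟨minHeight_le (by omega), by omega⟩
  · rintro ⟨hmv, hvn⟩
    obtain ⟨i, hi, hsi, hv⟩ := exists_mem_sgv_eq_two_height_eq hmv (by omega)
    exact ⟨i, ⟨hi, hsi⟩, hv⟩

theorem image_neg_height_filter_sgv_eq_two :
    ((Icc 1 n).filter (fun m => sgv n x m = 2 ∧ m ∉ x)).image (fun j => -height x j) =
      Icc 1 (-minHeight n x) := by
  ext v
  simp only [mem_image, mem_filter, mem_Icc]
  constructor
  · rintro ⟨j, ⟨⟨hj1, hjn⟩, hsj, hjx⟩, rfl⟩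
    have := height_neg_of_notMem_of_sgv_eq_two hjx hj1 hsj
    have := minHeight_le (x := x) hjn
    omega
  · rintro ⟨hv, hvm⟩
    obtain ⟨j, hj, hjx, hsj, hjv⟩ :=
      exists_notMem_sgv_eq_two_height_eq (n := n) (x := x) (v := -v) (by omega) (by omega)
    exact ⟨j, ⟨mem_Icc.1 hj, hsj, hjx⟩, by omega⟩

theorem natCast_card_filter_sgv_eq_two (hx : x ⊆ Icc 1 n) :
    (#(x.filter (fun m => sgv n x m = 2)) : ℤ) = height x n - minHeight n x := by
  have := natCast_card_eq_of_image_eq_Icc (strictMonoOn_height_pred hx).injOn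
    (image_height_pred_filter_sgv_eq_two hx) (by linarith [minHeight_le (n := n) (x := x) le_rfl])
  linarith

theorem natCast_card_filter_sgv_eq_two_filter_le (hx : x ⊆ Icc 1 n) {i : ℕ} (hi : i ∈ x)
    (hsi : sgv n x i = 2) :
    (#((x.filter (fun m => sgv n x m = 2)).filter (· ≤ i)) : ℤ) =
      height x (i - 1) + 1 - minHeight n x :=
  natCast_card_filter_le_of_strictMonoOn (strictMonoOn_height_pred hx)
    (image_height_pred_filter_sgv_eq_two hx) (mem_filter.2 ⟨hi, hsi⟩)

theorem natCast_card_filter_sgv_eq_two_notMem_filter_le {j : ℕ} (hj : j ∈ Icc 1 n) (hjx : j ∉ x)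
    (hsj : sgv n x j = 2) :
    (#(((Icc 1 n).filter (fun m => sgv n x m = 2 ∧ m ∉ x)).filter (· ≤ j)) : ℤ) =
      -height x j := by
  have := natCast_card_filter_le_of_strictMonoOn strictAntiOn_height.neg
    image_neg_height_filter_sgv_eq_two (mem_filter.2 ⟨hj, hsj, hjx⟩)
  simpa using this

theorem ccfun_of_le {i j : ℕ} (h : i ≤ j) : ccfun n x i j = cfun x i j := by
  rw [ccfun, cfun, cIcc, if_pos h]

theorem card_cIcc_of_le {i j : ℕ} (h : i ≤ j) : #(cIcc n i j) = j + 1 - i := by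
  rw [cIcc, if_pos h, Nat.card_Icc]

theorem disjoint_Icc_Icc_one_of_lt {i j : ℕ} (h : j < i) : Disjoint (Icc i n) (Icc 1 j) :=
  disjoint_left.2 fun m hm hm' => by simp only [mem_Icc] at hm hm'; omega

theorem card_cIcc_of_lt {i j : ℕ} (h : j < i) : #(cIcc n i j) = n + 1 - i + j := by
  rw [cIcc, if_neg (by omega), card_union_of_disjoint (disjoint_Icc_Icc_one_of_lt h),
    Nat.card_Icc, Nat.card_Icc]
  omega

theorem ccfun_of_lt {i j : ℕ} (hji : j < i) (hi1 : 1 ≤ i) (hin : i ≤ n) :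
    ccfun n x i j = height x n - height x (i - 1) + height x j := by
  change signedCard x (cIcc n i j) = _
  rw [cIcc, if_neg (by omega), signedCard_union (disjoint_Icc_Icc_one_of_lt hji),
    ← cfun_eq_height_sub hi1 (by omega)]
  rfl

theorem ccfun_eq_zero_of_mem (hx : x ⊆ Icc 1 n) {i j : ℕ} (hi : i ∈ x) (hsi : sgv n x i = 2)
    (hjn : j ≤ n) (h0 : ccfun n x i j = 0) :
    j < i ∧ height x j = height x (i - 1) - height x n := by
  obtain ⟨hi1, hin⟩ := mem_Icc.1 (hx hi)
  have hji : j < i := by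
    by_contra! hij
    rw [ccfun_of_le hij, cfun_eq_height_sub hi1 (by omega)] at h0
    have := (sgv_mem_eq_two_iff_height hi hi1).1 hsi j hij hjn
    omega
  rw [ccfun_of_lt hji hi1 hin] at h0
  exact ⟨hji, by omega⟩

theorem ccfun_eq_zero_of_notMem {i j : ℕ} (hj1 : 1 ≤ j) (hjx : j ∉ x) (hsj : sgv n x j = 2)
    (hi : i ∈ Icc 1 n) (h0 : ccfun n x i j = 0) :
    j < i ∧ height x (i - 1) = height x j + height x n := by
  obtain ⟨hi1, hin⟩ := mem_Icc.1 hi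
  have hji : j < i := by
    by_contra! hij
    rw [ccfun_of_le hij, cfun_eq_height_sub hi1 (by omega)] at h0
    have := (sgv_notMem_eq_two_iff_height hjx hj1).1 hsj (i - 1) (by omega)
    omega
  rw [ccfun_of_lt hji hi1 hin] at h0
  exact ⟨hji, by omega⟩

theorem isCPairIn_of_height_eq (hx : x ⊆ Icc 1 n) {i j : ℕ} (hi : i ∈ x) (hsi : sgv n x i = 2)
    (hj : j ∈ Icc 1 n) (hjx : j ∉ x) (hsj : sgv n x j = 2)
    (hv : height x j = height x (i - 1) - height x n) : IsCPairIn n x i j := by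
  obtain ⟨hi1, hin⟩ := mem_Icc.1 (hx hi)
  have hji := notMem_lt_mem hx hi hsi hj hjx hsj
  refine ⟨hj, by rw [ccfun_of_lt hji hi1 hin]; omega, fun j' hj' h0 => ?_⟩
  obtain ⟨hj'i, hv'⟩ := ccfun_eq_zero_of_mem hx hi hsi (mem_Icc.1 hj').2 h0
  have hjj' : j ≤ j' := by
    by_contra! h
    have := (sgv_notMem_eq_two_iff_height hjx (mem_Icc.1 hj).1).1 hsj j' h
    omega
  rw [card_cIcc_of_lt hji, card_cIcc_of_lt hj'i]
  omega

theorem isCPairOut_of_height_eq (hx : x ⊆ Icc 1 n) {i j : ℕ} (hj : j ∈ Icc 1 n) (hjx : j ∉ x)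
    (hsj : sgv n x j = 2) (hi : i ∈ x) (hsi : sgv n x i = 2)
    (hv : height x (i - 1) = height x j + height x n) : IsCPairOut n x j i := by
  obtain ⟨hi1, hin⟩ := mem_Icc.1 (hx hi)
  have hji := notMem_lt_mem hx hi hsi hj hjx hsj
  refine ⟨hx hi, by rw [ccfun_of_lt hji hi1 hin]; omega, fun i' hi' h0 => ?_⟩
  obtain ⟨hji', hv'⟩ := ccfun_eq_zero_of_notMem (mem_Icc.1 hj).1 hjx hsj hi' h0
  have hi'i : i' ≤ i := by
    by_contra! h
    have := mem_Icc.1 hi'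
    have := (sgv_mem_eq_two_iff_height hi hi1).1 hsi (i' - 1) (by omega) (by omega)
    omega
  rw [card_cIcc_of_lt hji, card_cIcc_of_lt hji']
  omega

theorem exists_isCPairIn (hx : x ⊆ Icc 1 n) {i : ℕ} (hi : i ∈ x) (hsi : sgv n x i = 2)
    (hmv : minHeight n x ≤ height x (i - 1) - height x n) :
    ∃ j ∈ Icc 1 n, j ∉ x ∧ sgv n x j = 2 ∧ height x j = height x (i - 1) - height x n ∧
      IsCPairIn n x i j := by
  obtain ⟨hi1, hin⟩ := mem_Icc.1 (hx hi)
  have := (sgv_mem_eq_two_iff_height hi hi1).1 hsi n hin le_rfl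
  obtain ⟨j, hj, hjx, hsj, hv⟩ := exists_notMem_sgv_eq_two_height_eq hmv (by omega)
  exact ⟨j, hj, hjx, hsj, hv, isCPairIn_of_height_eq hx hi hsi hj hjx hsj hv⟩

theorem exists_isCPairOut (hx : x ⊆ Icc 1 n) (hT : 0 ≤ height x n) {j : ℕ} (hj : j ∈ Icc 1 n)
    (hjx : j ∉ x) (hsj : sgv n x j = 2) :
    ∃ i ∈ x, sgv n x i = 2 ∧ height x (i - 1) = height x j + height x n ∧
      IsCPairOut n x j i := by
  obtain ⟨hj1, hjn⟩ := mem_Icc.1 hj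
  have := height_neg_of_notMem_of_sgv_eq_two hjx hj1 hsj
  have := minHeight_le (n := n) (x := x) hjn
  obtain ⟨i, hi, hsi, hv⟩ :=
    exists_mem_sgv_eq_two_height_eq (n := n) (x := x) (v := height x j + height x n)
      (by omega) (by omega)
  exact ⟨i, hi, hsi, hv, isCPairOut_of_height_eq hx hj hjx hsj hi hsi hv⟩

theorem cStar_iff (hx : x ⊆ Icc 1 n) (hT : 0 ≤ height x n) {i : ℕ} (hi : i ∈ Icc 1 n) :
    CStar n x i ↔ i ∈ x ∧ sgv n x i = 2 ∧ height x (i - 1) - height x n < minHeight n x := by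
  obtain ⟨hi1, hin⟩ := mem_Icc.1 hi
  constructor
  · rintro (⟨hix, hno⟩ | ⟨hix, hno⟩)
    · have hsi : sgv n x i = 2 := by
        refine (sgv_mem_eq_two_iff hix).2 fun ⟨j, hj, h0⟩ => hno ⟨j, ?_, ?_⟩
        · rw [mem_Ioc] at hj
          exact mem_Icc.2 ⟨by omega, hj.2⟩
        · rwa [ccfun_of_le (mem_Ioc.1 hj).1.le]
      refine ⟨hix, hsi, lt_of_not_ge fun hmv => ?_⟩
      obtain ⟨j, hj, -, -, -, hpair⟩ := exists_isCPairIn hx hix hsi hmv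
      exact hno ⟨j, hj, hpair.2.1⟩
    · have hsi : sgv n x i = 2 := by
        refine (sgv_notMem_eq_two_iff hix).2 fun ⟨j, hj, h0⟩ => hno ⟨j, ?_, ?_⟩
        · rw [mem_Ico] at hj
          exact mem_Icc.2 ⟨hj.1, by omega⟩
        · rwa [ccfun_of_le (mem_Ico.1 hj).2.le]
      obtain ⟨i', -, -, -, hpair⟩ := exists_isCPairOut hx hT hi hix hsi
      exact (hno ⟨i', hpair.1, hpair.2.1⟩).elim
  · rintro ⟨hix, hsi, hlt⟩
    refine Or.inl ⟨hix, fun ⟨j, hj, h0⟩ => ?_⟩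
    have := (ccfun_eq_zero_of_mem hx hix hsi (mem_Icc.1 hj).2 h0).2
    have := minHeight_le (x := x) (mem_Icc.1 hj).2
    omega

theorem ncard_cStar (hx : x ⊆ Icc 1 n) (hT : 0 ≤ height x n) :
    ({i | i ∈ Icc 1 n ∧ CStar n x i}.ncard : ℤ) = height x n := by
  set S := (x.filter (fun m => sgv n x m = 2)).filter
    (fun i => height x (i - 1) - height x n < minHeight n x)
  have hset : {i | i ∈ Icc 1 n ∧ CStar n x i} = ↑S := by
    ext i
    simp only [Set.mem_ofPred_eq, S, coe_filter, mem_filter, and_assoc]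
    exact ⟨fun ⟨hi, hc⟩ => (cStar_iff hx hT hi).1 hc,
      fun h => ⟨hx h.1, (cStar_iff hx hT (hx h.1)).2 h⟩⟩
  have himage : S.image (fun i => height x (i - 1)) =
      Icc (minHeight n x) (minHeight n x + height x n - 1) := by
    ext v
    simp only [S, mem_image, mem_filter, mem_Icc]
    constructor
    · rintro ⟨i, ⟨⟨hi, -⟩, hlt⟩, rfl⟩
      have := mem_Icc.1 (hx hi)
      exact ⟨minHeight_le (by omega), by omega⟩
    · rintro ⟨hmv, hv⟩
      have := minHeight_nonpos (n := n) (x := x)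
      obtain ⟨i, hi, hsi, rfl⟩ := exists_mem_sgv_eq_two_height_eq hmv (by omega)
      exact ⟨i, ⟨⟨hi, hsi⟩, by omega⟩, rfl⟩
  rw [hset, Set.ncard_coe_finset, natCast_card_eq_of_image_eq_Icc
    ((strictMonoOn_height_pred hx).injOn.mono (coe_subset.2 (filter_subset _ _))) himage
    (by omega)]
  ring

theorem isCPairIn_of_isLeast {i j : ℕ} (hix : i ∈ x)
    (hj : IsLeast {j' | i < j' ∧ j' ≤ n ∧ cfun x i j' = 0} j) : IsCPairIn n x i j := by
  obtain ⟨⟨hij, hjn, h0⟩, hleast⟩ := hj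
  refine ⟨mem_Icc.2 ⟨by omega, hjn⟩, by rwa [ccfun_of_le hij.le], fun j' hj' h0' => ?_⟩
  rcases lt_or_ge j' i with hj'i | hij'
  · rw [card_cIcc_of_le hij.le, card_cIcc_of_lt hj'i]
    omega
  · have hne : j' ≠ i := by
      rintro rfl
      rw [ccfun_of_le le_rfl, cfun_self_of_mem hix] at h0'
      omega
    have := hleast ⟨lt_of_le_of_ne hij' hne.symm, (mem_Icc.1 hj').2, by rwa [← ccfun_of_le hij']⟩
    rw [card_cIcc_of_le hij.le, card_cIcc_of_le hij']
    omega

theorem isCPairOut_of_isGreatest {i j : ℕ} (hin : i ≤ n) (hix : i ∉ x)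
    (hj : IsGreatest {j' | 1 ≤ j' ∧ j' < i ∧ cfun x j' i = 0} j) : IsCPairOut n x i j := by
  obtain ⟨⟨hj1, hji, h0⟩, hgreatest⟩ := hj
  refine ⟨mem_Icc.2 ⟨hj1, by omega⟩, by rwa [ccfun_of_le hji.le], fun j' hj' h0' => ?_⟩
  rcases lt_or_ge i j' with hij' | hj'i
  · rw [card_cIcc_of_le hji.le, card_cIcc_of_lt hij']
    omega
  · have hne : j' ≠ i := by
      rintro rfl
      rw [ccfun_of_le le_rfl, cfun_self_of_notMem hix] at h0'
      omega
    have := hgreatest ⟨(mem_Icc.1 hj').1, lt_of_le_of_ne hj'i hne, by rwa [← ccfun_of_le hj'i]⟩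
    rw [card_cIcc_of_le hji.le, card_cIcc_of_le hj'i]
    omega

end Signature

open Signature

open Classical in
/-- relation between the linear and circular signatures for
`x ∈ [n]^(k)`, `n/2 ≤ k ≤ n`. Writing `i₁ < ... < i_t` for `*(x) ∩ x` and
`j₁ < ... < j_{t-2k+n}` for `*(x) \ x` (an element `i` of `*(x) ∩ x` is `i_r` where
`r` is the number of elements of `*(x) ∩ x` that are `≤ i`, and similarly for the
`j`'s): for `r ≤ 2k-n` one has `csg(x)_{i_r} = *` (and `|*'(x)| = 2k - n`); for
`r > 2k-n`, `csg(x)_{i_r} = 1` with circular pair `j_{t+1-r}`; and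
`csg(x)_{j_s} = 0` with circular pair `i_{t+1-s}`. At non-starred positions the
circular signature and pairs agree with the linear ones. -/
theorem stmt_16 (n k : ℕ) (x : Finset ℕ) (hx : x ⊆ Finset.Icc 1 n)
    (hk : x.card = k) (hn2 : n ≤ 2 * k) :
    -- behavior of starred positions inside x
    (∀ i ∈ x, sgv n x i = 2 →
      ((((x.filter (fun m => sgv n x m = 2)).filter (fun m => m ≤ i)).card ≤ 2 * k - n →
          CStar n x i) ∧
       (2 * k - n < ((x.filter (fun m => sgv n x m = 2)).filter (fun m => m ≤ i)).card →
          ∃ j ∈ Finset.Icc 1 n, j ∉ x ∧ sgv n x j = 2 ∧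
            ((((Finset.Icc 1 n).filter (fun m => sgv n x m = 2 ∧ m ∉ x)).filter
                (fun m => m ≤ j)).card +
              ((x.filter (fun m => sgv n x m = 2)).filter (fun m => m ≤ i)).card =
              (x.filter (fun m => sgv n x m = 2)).card + 1) ∧
            IsCPairIn n x i j))) ∧
    -- behavior of starred positions outside x
    (∀ j ∈ Finset.Icc 1 n, j ∉ x → sgv n x j = 2 →
      ∃ i ∈ x, sgv n x i = 2 ∧
        (((x.filter (fun m => sgv n x m = 2)).filter (fun m => m ≤ i)).card +
          (((Finset.Icc 1 n).filter (fun m => sgv n x m = 2 ∧ m ∉ x)).filter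
            (fun m => m ≤ j)).card =
          (x.filter (fun m => sgv n x m = 2)).card + 1) ∧
        IsCPairOut n x j i) ∧
    -- |*'(x)| = 2k - n
    {i | i ∈ Finset.Icc 1 n ∧ CStar n x i}.ncard + n = 2 * k ∧
    -- agreement at non-starred positions
    (∀ i ∈ Finset.Icc 1 n, sgv n x i ≠ 2 →
      (i ∈ x → ∀ j, IsLeast {j' | i < j' ∧ j' ≤ n ∧ cfun x i j' = 0} j →
        IsCPairIn n x i j) ∧
      (i ∉ x → ∀ j, IsGreatest {j' | 1 ≤ j' ∧ j' < i ∧ cfun x j' i = 0} j →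
        IsCPairOut n x i j)) := by
  have hT : height x n = 2 * (k : ℤ) - n := by rw [height_eq hx, hk]
  have hT0 : 0 ≤ height x n := by omega
  have hcard := natCast_card_filter_sgv_eq_two hx
  refine ⟨fun i hi hsi => ⟨fun hr => ?_, fun hr => ?_⟩, fun j hj hjx hsj => ?_, ?_,
    fun i hi _ => ⟨fun hix _ hj => isCPairIn_of_isLeast hix hj,
      fun hix _ hj => isCPairOut_of_isGreatest (mem_Icc.1 hi).2 hix hj⟩⟩
  · have := natCast_card_filter_sgv_eq_two_filter_le hx hi hsi
    exact (cStar_iff hx hT0 (hx hi)).2 ⟨hi, hsi, by omega⟩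
  · have hrank := natCast_card_filter_sgv_eq_two_filter_le hx hi hsi
    obtain ⟨j, hj, hjx, hsj, hv, hpair⟩ := exists_isCPairIn hx hi hsi (by omega)
    have := natCast_card_filter_sgv_eq_two_notMem_filter_le hj hjx hsj
    exact ⟨j, hj, hjx, hsj, by omega, hpair⟩
  · obtain ⟨i, hi, hsi, hv, hpair⟩ := exists_isCPairOut hx hT0 hj hjx hsj
    have := natCast_card_filter_sgv_eq_two_filter_le hx hi hsi
    have := natCast_card_filter_sgv_eq_two_notMem_filter_le hj hjx hsj
    exact ⟨i, hi, hsi, by omega, hpair⟩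
  · have := ncard_cStar hx hT0
    omega
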